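/- Let m, k, l, N be positive integers with m > 1 and 1 ≤ l < k. If k divides m, then W_N^{[m,k,l]}(z) = z^Γ, where Γ = N((k−1)(N−1)+2l)/2. -/

import Mathlib

open scoped BigOperators

/-- `pPoly m j` is the polynomial `p_j^{[m]}(z) = ∑_{i=0}^{⌊j/m⌋} z^{j-im}/(i!(j-im)!)`
for `j ≥ 0`, and `0` for `j < 0`. -/
noncomputable def pPoly (m : ℕ) : ℤ → Polynomial ℂ := fun j =>
  if 0 ≤ j then
    ∑ i ∈ Finset.range (j.toNat / m + 1),
      Polynomial.C (((Nat.factorial i * Nat.factorial (j.toNat - i * m) : ℕ) : ℂ))⁻¹ *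
        Polynomial.X ^ (j.toNat - i * m)
  else 0

/-- The normalizing constant `c_N^{[m,k,l]} = k^{-N(N-1)/2} ∏_{i=1}^{N} (k(i-1)+l)!/(i-1)!`. -/
noncomputable def cConst (k l N : ℕ) : ℂ :=
  ((k : ℂ) ^ (N * (N - 1) / 2))⁻¹ *
    ∏ i ∈ Finset.range N, ((Nat.factorial (k * i + l) : ℂ) / ((Nat.factorial i : ℕ) : ℂ))

/-- The generalized Wronskian–Hermite polynomial
`W_N^{[m,k,l]}(z) = c_N^{[m,k,l]} · det_{1≤i,j≤N} ( p^{[m]}_{k(j-1)+l-i+1}(z) )`. -/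
noncomputable def WPoly (m k l N : ℕ) : Polynomial ℂ :=
  Polynomial.C (cConst k l N) *
    Matrix.det (Matrix.of fun i j : Fin N =>
      pPoly m (((k * (j : ℕ) + l : ℕ) : ℤ) - ((i : ℕ) : ℤ)))

/-!
Write `m = k m'`. Since `exp(zε + εᵐ) = exp(zε) · exp(εᵐ)`, the matrix `(p_{kj+l-i})` is the
product of `Q = (q_{kj+l-i})`, where `q_r = zʳ / r!`, and the upper unitriangular Toeplitz matrix
of `exp(ε^{m'})`; here `l < k` guarantees that no terms with negative column index appear. Hence
`det P = det Q`. Multiplying row `i` of `Q` by `zⁱ` and taking `z^{kj+l}` out of column `j` gives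
`det Q = z^Γ · det((kj+l)_i / (kj+l)!)`, with falling factorials `(a)_i`; the remaining constant
determinant is a Vandermonde determinant in the nodes `kj + l`, which is exactly `1 / c_N`.
-/

open Polynomial Finset Matrix
open scoped Nat

/-- The coefficients of `exp(zε) = ∑ qPoly r · εʳ`. -/
noncomputable def qPoly (r : ℤ) : ℂ[X] :=
  if 0 ≤ r then C ((r.toNat ! : ℂ))⁻¹ * X ^ r.toNat else 0

lemma qPoly_of_neg {r : ℤ} (hr : r < 0) : qPoly r = 0 :=
  if_neg (not_le.2 hr)

lemma qPoly_natCast (n : ℕ) : qPoly n = C ((n ! : ℂ))⁻¹ * X ^ n := by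
  simp [qPoly]

lemma qPoly_natCast_sub (a i : ℕ) :
    qPoly ((a : ℤ) - i) = C ((a.descFactorial i : ℂ) / a !) * X ^ (a - i) := by
  rcases lt_or_ge a i with h | h
  · rw [qPoly_of_neg (by omega), Nat.descFactorial_eq_zero_iff_lt.2 h]
    simp
  · rw [← Nat.cast_sub h, qPoly_natCast, ← Nat.factorial_mul_descFactorial h]
    have : (a.descFactorial i : ℂ) ≠ 0 := by
      exact_mod_cast (Nat.descFactorial_pos.2 h).ne'
    push_cast
    congr 2
    field_simp

lemma pPoly_eq_sum_qPoly {m : ℕ} (hm : 0 < m) {z : ℤ} {R : ℕ} (hR : z.toNat / m < R) :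
    pPoly m z = ∑ s ∈ range R, C ((s ! : ℂ))⁻¹ * qPoly (z - s * m) := by
  rcases lt_or_ge z 0 with hz | hz
  · rw [pPoly, if_neg (not_le.2 hz)]
    refine (sum_eq_zero fun s _ => ?_).symm
    have : (0 : ℤ) ≤ s * m := by positivity
    rw [qPoly_of_neg (by omega), mul_zero]
  obtain ⟨n, rfl⟩ := Int.eq_ofNat_of_zero_le hz
  rw [Int.toNat_natCast] at hR
  rw [pPoly, if_pos hz, Int.toNat_natCast]
  rw [← sum_subset (range_subset_range.2 hR) fun s _ hs => ?_]
  · refine sum_congr rfl fun s hs => ?_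
    have : s * m ≤ n := (Nat.le_div_iff_mul_le hm).1 (by simpa [Nat.lt_succ_iff] using hs)
    rw [show (n : ℤ) - s * m = ((n - s * m : ℕ) : ℤ) by push_cast [Nat.cast_sub this]; ring,
      qPoly_natCast, ← mul_assoc, ← C_mul, Nat.cast_mul, mul_inv]
  · have : n < s * m := by
      simp only [mem_range, not_lt] at hs
      exact (Nat.div_lt_iff_lt_mul hm).1 (by omega)
    rw [qPoly_of_neg (by omega), mul_zero]

/-- The upper unitriangular Toeplitz matrix of the series `exp(εᵐ) = ∑ₛ εˢᵐ / s!`. -/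
noncomputable def expToeplitz (m N : ℕ) : Matrix (Fin N) (Fin N) ℂ[X] :=
  of fun t j => ∑ s ∈ range N, if (t : ℕ) + s * m = j then C ((s ! : ℂ))⁻¹ else 0

lemma det_expToeplitz {m : ℕ} (hm : 0 < m) (N : ℕ) : (expToeplitz m N).det = 1 := by
  have : (expToeplitz m N).IsUpperTriangular := fun t j (hjt : j < t) => by
    rw [expToeplitz, of_apply]
    exact sum_eq_zero fun s _ => if_neg (by rw [Fin.lt_def] at hjt; omega)
  rw [det_of_isUpperTriangular this]
  refine prod_eq_one fun t _ => ?_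
  rw [expToeplitz, of_apply, sum_eq_single_of_mem 0 (mem_range.2 t.pos) fun s _ hs => ?_]
  · simp
  · have := Nat.mul_pos (Nat.pos_of_ne_zero hs) hm
    exact if_neg (by omega)

lemma pPoly_matrix_eq_qPoly_matrix_mul_expToeplitz {k l m N : ℕ} (hlk : l < k) (hm : 0 < m) :
    (of fun i j : Fin N => pPoly (k * m) (((k * j + l : ℕ) : ℤ) - (i : ℕ))) =
      (of fun i t : Fin N => qPoly (((k * t + l : ℕ) : ℤ) - (i : ℕ))) * expToeplitz m N := by
  have hkm : 0 < k * m := Nat.mul_pos (by omega) hm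
  refine Matrix.ext fun i j => ?_
  have hbound : (((k * j + l : ℕ) : ℤ) - (i : ℕ)).toNat / (k * m) < N := by
    refine lt_of_lt_of_le ((Nat.div_lt_iff_lt_mul hkm).2 ?_) j.isLt
    have : (j + 1) * k ≤ (j + 1) * (k * m) := Nat.mul_le_mul_left _ (Nat.le_mul_of_pos_right k hm)
    have : (((k * j + l : ℕ) : ℤ) - (i : ℕ)).toNat ≤ k * j + l := by omega
    nlinarith
  rw [of_apply, pPoly_eq_sum_qPoly hkm hbound, mul_apply]
  simp only [of_apply, expToeplitz, mul_sum, mul_ite, mul_zero]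
  rw [sum_comm]
  refine sum_congr rfl fun s _ => ?_
  by_cases hs : s * m ≤ j
  · rw [Fintype.sum_eq_single ⟨j - s * m, by omega⟩
      fun t ht => if_neg fun h => ht (Fin.ext (by dsimp only; omega)),
      if_pos (by dsimp only; omega), mul_comm]
    congr 2
    push_cast [Nat.cast_sub hs]
    ring
  · -- `s m > j` puts the index below `l - k < 0`
    rw [sum_eq_zero fun t _ => if_neg (by omega), qPoly_of_neg, mul_zero]
    push_cast
    nlinarith

section Determinants

variable {R : Type*} [CommRing R]

lemma X_pow_sum_mul_det_C_mul_X_pow_sub {n : Type*} [Fintype n] [DecidableEq n]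
    (a : Matrix n n R) (r c : n → ℕ) (ha : ∀ i j, c j < r i → a i j = 0) :
    X ^ (∑ i, r i) * (of fun i j => C (a i j) * X ^ (c j - r i)).det =
      C a.det * X ^ (∑ j, c j) := by
  rw [← prod_pow_eq_pow_sum, ← det_mul_column, ← prod_pow_eq_pow_sum, mul_comm, RingHom.map_det,
    ← det_mul_row]
  congr 1
  refine Matrix.ext fun i j => ?_
  simp only [of_apply, RingHom.mapMatrix_apply, map_apply]
  rcases lt_or_ge (c j) (r i) with h | h
  · simp [ha i j h]
  · rw [mul_left_comm, ← pow_add, Nat.add_sub_cancel' h, mul_comm]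

lemma det_descFactorial_eq_det_vandermonde [IsDomain R] {N : ℕ} (v : Fin N → ℕ) :
    (of fun i j : Fin N => ((v j).descFactorial i : R)).det =
      (vandermonde fun j => (v j : R)).det := by
  rw [det_eval_matrixOfPolynomials_eq_det_vandermonde _ (fun i => descPochhammer R i)
    (fun i => descPochhammer_natDegree R i) (fun i => monic_descPochhammer R i),
    ← det_transpose]
  congr 1
  refine Matrix.ext fun i j => ?_
  simp [descPochhammer_eval_eq_descFactorial]

lemma det_vandermonde_const_mul {N : ℕ} (a : R) (v : Fin N → R) :
    (vandermonde fun i => a * v i).det = a ^ (N * (N - 1) / 2) * (vandermonde v).det := by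
  have hsum : ∑ j : Fin N, (j : ℕ) = N * (N - 1) / 2 := by
    rw [Fin.sum_univ_eq_sum_range (fun j => j) N, sum_range_id]
  rw [← hsum, ← prod_pow_eq_pow_sum, ← det_mul_row]
  congr 1
  refine Matrix.ext fun i j => ?_
  simp [mul_pow]

lemma det_vandermonde_natCast (N : ℕ) :
    (vandermonde fun i : Fin N => (i : R)).det = ∏ i ∈ range N, (i ! : R) := by
  cases N with
  | zero => simp
  | succ n => rw [det_vandermonde_id_eq_superFactorial, ← Nat.prod_range_succ_factorial,
      Nat.cast_prod]

end Determinants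

lemma cConst_mul_det_descFactorial_div_factorial {k : ℕ} (hk : k ≠ 0) (l N : ℕ) :
    cConst k l N *
      (of fun i j : Fin N => ((k * j + l).descFactorial i : ℂ) / (k * j + l)!).det = 1 := by
  have hrows := det_mul_row (fun j : Fin N => ((k * j + l)! : ℂ)⁻¹)
    (of fun i j : Fin N => ((k * j + l).descFactorial i : ℂ))
  simp only [of_apply, ← div_eq_inv_mul] at hrows
  have hvandermonde : (vandermonde fun j : Fin N => ((k * j + l : ℕ) : ℂ)).det =
      (k : ℂ) ^ (N * (N - 1) / 2) * ∏ i ∈ range N, (i ! : ℂ) := by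
    push_cast
    rw [det_vandermonde_add, det_vandermonde_const_mul, det_vandermonde_natCast]
  rw [hrows, det_descFactorial_eq_det_vandermonde, hvandermonde, prod_inv_distrib,
    Fin.prod_univ_eq_prod_range (fun j => ((k * j + l)! : ℂ)), cConst, prod_div_distrib]
  have : (k : ℂ) ≠ 0 := by exact_mod_cast hk
  have : ∏ j ∈ range N, ((k * j + l)! : ℂ) ≠ 0 := prod_ne_zero_iff.2 fun j _ =>
    Nat.cast_ne_zero.2 (Nat.factorial_ne_zero _)
  have : ∏ i ∈ range N, (i ! : ℂ) ≠ 0 := prod_ne_zero_iff.2 fun i _ =>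
    Nat.cast_ne_zero.2 (Nat.factorial_ne_zero _)
  field_simp

lemma sum_range_mul_add_eq {k : ℕ} (hk : 0 < k) (l N : ℕ) :
    ∑ j ∈ range N, (k * j + l) = N * ((k - 1) * (N - 1) + 2 * l) / 2 + ∑ i ∈ range N, i := by
  have hgauss := sum_range_id_mul_two N
  obtain ⟨k, rfl⟩ := Nat.exists_eq_add_of_le' hk
  have : N * (k * (N - 1) + 2 * l) = 2 * (k * ∑ i ∈ range N, i + N * l) := by
    rw [mul_add, mul_left_comm, ← hgauss]
    ring
  rw [sum_add_distrib, ← mul_sum, sum_const, card_range, smul_eq_mul, Nat.add_sub_cancel, this,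
    Nat.mul_div_cancel_left _ two_pos]
  ring

theorem wronskianHermite_eq_monomial_of_dvd
    (m k l N : ℕ) (hm : 1 < m) (hlk : l < k) (hkm : k ∣ m) :
    WPoly m k l N = Polynomial.X ^ (N * ((k - 1) * (N - 1) + 2 * l) / 2) := by
  obtain ⟨m', rfl⟩ := hkm
  have hk : 0 < k := by omega
  have hm' : 0 < m' := Nat.pos_of_ne_zero (by rintro rfl; simp at hm)
  set d : Matrix (Fin N) (Fin N) ℂ :=
    of fun i j => ((k * j + l).descFactorial i : ℂ) / (k * j + l)!
  have hQ := X_pow_sum_mul_det_C_mul_X_pow_sub d (fun i => i) (fun j => k * j + l)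
    fun i j h => by simp [d, Nat.descFactorial_eq_zero_iff_lt.2 h]
  simp only [d, of_apply, ← qPoly_natCast_sub] at hQ
  apply mul_left_cancel₀ (pow_ne_zero (∑ i : Fin N, (i : ℕ)) (X_ne_zero (R := ℂ)))
  rw [WPoly, pPoly_matrix_eq_qPoly_matrix_mul_expToeplitz hlk hm', det_mul,
    det_expToeplitz hm', mul_one, mul_left_comm, hQ, ← mul_assoc, ← C_mul,
    cConst_mul_det_descFactorial_div_factorial hk.ne', C_1, one_mul, ← pow_add]
  rw [Fin.sum_univ_eq_sum_range (fun j => k * j + l), Fin.sum_univ_eq_sum_range (fun i => i),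
    sum_range_mul_add_eq hk, add_comm]
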